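/- Let $G$ be a finite group and $\pi : A(G) \to G$ the unique group homomorphism with $\pi \circ \varphi_G = \mathrm{id}_G$, and let $Z_1 = \ker \pi$. Then for every $z \in Z_1$, $z$ belongs to the derived (commutator) subgroup of $A(G)$ if and only if $z$ has finite order; i.e. $Z_1 \cap A(G)' = Tor(Z_1)$. -/

import Mathlib

/-!
Write `φ = toEnvelGroup (Conj G)`. Since `a * φ x * a⁻¹ = φ (π a * x * (π a)⁻¹)`, every element of
`ker π` commutes with the generators `φ x`, so `ker π` is central; it has finite index because `G`
is finite. A commutator `⁅a, b⁆` only depends on `a` and `b` modulo the centre, so `A(G)` has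
finitely many commutators, and by Schur's theorem `A(G)'` is finite: its elements have finite order.

Conversely, `φ x ↦ [x]` extends to a homomorphism from `A(G)` to the free abelian group on the
conjugacy classes of `G`, and the abelianization map of `A(G)` factors through it. That group is
torsion-free, so an element of finite order vanishes in the abelianization, i.e. lies in `A(G)'`.
-/

open Rack Quandle Subgroup
open scoped commutatorElement Quandles

section CommutatorSubgroup

variable {G : Type*} [Group G]

theorem commutatorElement_mul_mem_center {a b w v : G} (hw : w ∈ center G)
    (hv : v ∈ center G) : ⁅a * w, b * v⁆ = ⁅a, b⁆ := by
  rw [commutatorElement_mul_left_eq_conj_mul,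
    commutatorElement_eq_one_iff_commute.mpr (mem_center_iff.mp hw _).symm,
    commutatorElement_mul_right_eq_mul_conj,
    commutatorElement_eq_one_iff_commute.mpr (mem_center_iff.mp hv _)]
  group

theorem finite_commutatorSet_of_finiteIndex_center [(center G).FiniteIndex] :
    Finite (commutatorSet G) := by
  refine Set.Finite.subset (Set.finite_range fun p : (G ⧸ center G) × (G ⧸ center G) =>
    ⁅p.1.out, p.2.out⁆) ?_
  rintro _ ⟨a, b, rfl⟩
  obtain ⟨w, hw⟩ := QuotientGroup.mk_out_eq_mul (center G) a
  obtain ⟨v, hv⟩ := QuotientGroup.mk_out_eq_mul (center G) b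
  exact ⟨(a, b), by simp only [hw, hv, commutatorElement_mul_mem_center w.2 v.2]⟩

theorem isOfFinOrder_of_mem_commutator [(center G).FiniteIndex] {z : G}
    (hz : z ∈ commutator G) : IsOfFinOrder z :=
  have := finite_commutatorSet_of_finiteIndex_center (G := G)
  (commutator G).subtype.isOfFinOrder (isOfFinOrder_of_finite (⟨z, hz⟩ : commutator G))

theorem mem_commutator_of_isOfFinOrder {A : Type*} [Monoid A] [IsMulTorsionFree A]
    (f : G →* A) (g : A →* Abelianization G) (hgf : g.comp f = Abelianization.of) {z : G}
    (hz : IsOfFinOrder z) : z ∈ commutator G := by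
  rw [← Abelianization.ker_of, MonoidHom.mem_ker, ← hgf, MonoidHom.comp_apply,
    (f.isOfFinOrder hz).eq_one', map_one]

end CommutatorSubgroup

namespace Rack

theorem closure_range_toEnvelGroup (R : Type*) [Rack R] :
    closure (Set.range (toEnvelGroup R)) = ⊤ := by
  refine eq_top_iff.mpr fun a _ => Quotient.inductionOn a fun p => ?_
  induction p with
  | unit => exact one_mem _
  | incl x => exact subset_closure ⟨x, rfl⟩
  | mul a b ha hb => exact mul_mem ha hb
  | inv a ha => exact inv_mem ha

theorem EnvelGroup.hom_ext {R : Type*} [Rack R] {H : Type*} [Group H]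
    {f g : EnvelGroup R →* H} (h : ∀ x : R, f (toEnvelGroup R x) = g (toEnvelGroup R x)) :
    f = g :=
  MonoidHom.eq_of_eqOn_dense (closure_range_toEnvelGroup R) (by rintro _ ⟨x, rfl⟩; exact h x)

variable {G : Type*} [Group G]

local notation "φ" => toEnvelGroup (Conj G)

theorem toEnvelGroup_conj (x y : G) : φ (x * y * x⁻¹) = φ x * φ y * (φ x)⁻¹ :=
  (toEnvelGroup (Conj G)).map_act (x := x) (y := y)

section CanonicalProjection

variable (π : EnvelGroup (Conj G) →* G) (hπ : ∀ g : G, π (toEnvelGroup (Conj G) g) = g)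
include hπ

theorem mul_toEnvelGroup_mul_inv (a : EnvelGroup (Conj G)) (x : G) :
    a * φ x * a⁻¹ = φ (π a * x * (π a)⁻¹) := by
  induction (closure_range_toEnvelGroup (Conj G)).symm ▸ mem_top a using
    closure_induction generalizing x with
  | mem b hb =>
    obtain ⟨y, rfl⟩ := hb
    rw [hπ, ← toEnvelGroup_conj]
  | one => simp
  | mul b c _ _ hb hc =>
    rw [show b * c * φ x * (b * c)⁻¹ = b * (c * φ x * c⁻¹) * b⁻¹ by group, hc, hb, π.map_mul]
    congr 1
    group
  | inv b _ hb =>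
    have hb' := hb ((π b)⁻¹ * x * π b)
    rw [show π b * ((π b)⁻¹ * x * π b) * (π b)⁻¹ = x by group] at hb'
    rw [map_inv, inv_inv, ← hb']
    group

theorem ker_le_center_envelGroup : π.ker ≤ center (EnvelGroup (Conj G)) := by
  intro w hw
  have hconj : (MulAut.conj w).toMonoidHom = MonoidHom.id _ := EnvelGroup.hom_ext fun x => by
    simp [mul_toEnvelGroup_mul_inv π hπ, MonoidHom.mem_ker.mp hw]
  exact mem_center_iff.mpr fun a =>
    (mul_inv_eq_iff_eq_mul.mp (DFunLike.congr_fun hconj a : w * a * w⁻¹ = a)).symm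

theorem finiteIndex_center_envelGroup [Finite G] :
    (center (EnvelGroup (Conj G))).FiniteIndex :=
  finiteIndex_of_le (ker_le_center_envelGroup π hπ)

end CanonicalProjection

noncomputable section FreeConjClasses

variable (G)

def conjToFreeConjClasses : Conj G →◃ Conj (Multiplicative (ConjClasses G →₀ ℤ)) where
  toFun x := .ofAdd (.single (ConjClasses.mk x) 1)
  map_act' := by
    intro x y
    rw [conj_act_eq_conj, conj_act_eq_conj, mul_inv_cancel_comm,
      ConjClasses.mk_eq_mk_iff_isConj.mpr (isConj_iff.mpr ⟨x, rfl⟩).symm]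

def envelToFreeConjClasses : EnvelGroup (Conj G) →* Multiplicative (ConjClasses G →₀ ℤ) :=
  toEnvelGroup.map (conjToFreeConjClasses G)

@[simp]
theorem envelToFreeConjClasses_toEnvelGroup (x : G) :
    envelToFreeConjClasses G (φ x) = .ofAdd (.single (ConjClasses.mk x) 1) :=
  rfl

def ofConjClasses : ConjClasses G → Abelianization (EnvelGroup (Conj G)) :=
  Quotient.lift (fun g => Abelianization.of (φ g)) fun _ _ h => by
    obtain ⟨c, rfl⟩ := isConj_iff.mp h
    rw [toEnvelGroup_conj, map_mul, map_mul, map_inv, mul_inv_cancel_comm]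

@[simp]
theorem ofConjClasses_mk (x : G) :
    ofConjClasses G (ConjClasses.mk x) = Abelianization.of (φ x) :=
  rfl

def freeConjClassesToAbelianization :
    Multiplicative (ConjClasses G →₀ ℤ) →* Abelianization (EnvelGroup (Conj G)) :=
  AddMonoidHom.toMultiplicativeLeft
    (Finsupp.liftAddHom fun c => zmultiplesHom _ (Additive.ofMul (ofConjClasses G c)))

theorem freeConjClassesToAbelianization_comp_envelToFreeConjClasses :
    (freeConjClassesToAbelianization G).comp (envelToFreeConjClasses G) =
      Abelianization.of :=
  EnvelGroup.hom_ext fun x => by simp [freeConjClassesToAbelianization]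

end FreeConjClasses

end Rack

/-- For a finite group `G`, with `π : A(G) → G` the canonical homomorphism and
`Z₁ = ker π`, an element `z ∈ Z₁` lies in the derived subgroup of `A(G)` iff it has finite
order; i.e. `Z₁ ∩ A(G)' = Tor(Z₁)`. -/
theorem stmt14 {G : Type*} [Group G] [Finite G]
    (π : Rack.EnvelGroup (Quandle.Conj G) →* G)
    (hπ : ∀ g : G, π (Rack.toEnvelGroup (Quandle.Conj G) g) = g) :
    ∀ z ∈ π.ker,
      (z ∈ commutator (Rack.EnvelGroup (Quandle.Conj G)) ↔ IsOfFinOrder z) := by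
  have := finiteIndex_center_envelGroup π hπ
  exact fun z _ => ⟨isOfFinOrder_of_mem_commutator, mem_commutator_of_isOfFinOrder _ _
    (freeConjClassesToAbelianization_comp_envelToFreeConjClasses G)⟩
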